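/- Let 𝒳, C be types, g : 𝒳 → 𝒳 → C a comparison function, f_r : C × C × ℝ × ℝ → ℝ^{d_rel} a relational encoder, and ρ_full(x★; x, y) = Σ_{n=1}^{N} Σ_{n'=1}^{N} f_r(g(x_n, x★), g(x_n, x_{n'}), y_n, y_{n'}) the full relational encoding. Let μ : ℝ^{d_rel} → ℝ and σ : ℝ^{d_rel} → ℝ with σ(v) > 0 for all v, and define the RCNP predictive density p(y★; x, y, x★) = Π_{m=1}^{M} (2π σ(ρ_full(x★_m; x, y))²)^{-1/2} · exp(−(y★_m − μ(ρ_full(x★_m; x, y)))² / (2 σ(ρ_full(x★_m; x, y))²)) for target outputs y★ : Fin M → ℝ. If τ : 𝒳 → 𝒳 satisfies g(τ a, τ b) = g(a, b) for all a, b : 𝒳, then p(y★; τ ∘ x, y, τ ∘ x★) = p(y★; x, y, x★) for all x : Fin N → 𝒳, y : Fin N → ℝ, x★ : Fin M → 𝒳, and y★ : Fin M → ℝ. -/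

import Mathlib

open scoped BigOperators Real

/-- The full relational encoding (real-valued outputs). -/
noncomputable def rhoFull {𝒳 C : Type*} {N dRel : ℕ}
    (g : 𝒳 → 𝒳 → C) (fr : C × C × ℝ × ℝ → EuclideanSpace ℝ (Fin dRel))
    (xstar : 𝒳) (x : Fin N → 𝒳) (y : Fin N → ℝ) : EuclideanSpace ℝ (Fin dRel) :=
  ∑ n : Fin N, ∑ n' : Fin N, fr (g (x n) xstar, g (x n) (x n'), y n, y n')

/-- The RCNP predictive density: a product of independent Gaussian densities,
with mean and standard deviation decoded from the relational encodings. -/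
noncomputable def rcnpDensity {𝒳 C : Type*} {N M dRel : ℕ}
    (g : 𝒳 → 𝒳 → C) (fr : C × C × ℝ × ℝ → EuclideanSpace ℝ (Fin dRel))
    (μ σ : EuclideanSpace ℝ (Fin dRel) → ℝ)
    (x : Fin N → 𝒳) (y : Fin N → ℝ) (xstar : Fin M → 𝒳) (ystar : Fin M → ℝ) : ℝ :=
  ∏ m : Fin M,
    (Real.sqrt (2 * π * (σ (rhoFull g fr (xstar m) x y)) ^ 2))⁻¹ *
      Real.exp (-(ystar m - μ (rhoFull g fr (xstar m) x y)) ^ 2 /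
        (2 * (σ (rhoFull g fr (xstar m) x y)) ^ 2))

/-! The encoding only sees the inputs through `g`, so a `g`-preserving map leaves it unchanged;
the density only sees the inputs through the encoding. -/

theorem rhoFull_comp {𝒳 C : Type*} {N dRel : ℕ} {g : 𝒳 → 𝒳 → C}
    (fr : C × C × ℝ × ℝ → EuclideanSpace ℝ (Fin dRel)) {τ : 𝒳 → 𝒳}
    (hτ : ∀ a b, g (τ a) (τ b) = g a b) (xstar : 𝒳) (x : Fin N → 𝒳) (y : Fin N → ℝ) :
    rhoFull g fr (τ xstar) (τ ∘ x) y = rhoFull g fr xstar x y := by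
  simp only [rhoFull, Function.comp_apply, hτ]

theorem rcnpDensity_congr_rhoFull {𝒳 C : Type*} {N M dRel : ℕ} (g : 𝒳 → 𝒳 → C)
    (fr : C × C × ℝ × ℝ → EuclideanSpace ℝ (Fin dRel)) (μ σ : EuclideanSpace ℝ (Fin dRel) → ℝ)
    {x x' : Fin N → 𝒳} {xstar xstar' : Fin M → 𝒳} (y : Fin N → ℝ) (ystar : Fin M → ℝ)
    (h : ∀ m, rhoFull g fr (xstar' m) x' y = rhoFull g fr (xstar m) x y) :
    rcnpDensity g fr μ σ x' y xstar' ystar = rcnpDensity g fr μ σ x y xstar ystar := by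
  simp only [rcnpDensity, h]

theorem rcnpDensity_invariant_general {𝒳 C : Type*} {N M dRel : ℕ}
    (g : 𝒳 → 𝒳 → C) (fr : C × C × ℝ × ℝ → EuclideanSpace ℝ (Fin dRel))
    (μ σ : EuclideanSpace ℝ (Fin dRel) → ℝ)
    (τ : 𝒳 → 𝒳) (hτ : ∀ a b : 𝒳, g (τ a) (τ b) = g a b) :
    ∀ (x : Fin N → 𝒳) (y : Fin N → ℝ) (xstar : Fin M → 𝒳) (ystar : Fin M → ℝ),
      rcnpDensity g fr μ σ (τ ∘ x) y (τ ∘ xstar) ystar =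
        rcnpDensity g fr μ σ x y xstar ystar :=
  fun x y xstar ystar =>
    rcnpDensity_congr_rhoFull g fr μ σ y ystar fun m => rhoFull_comp fr hτ (xstar m) x y

/-- the RCNP predictive density is invariant under any map `τ`
that leaves the comparison function invariant. -/
theorem rcnpDensity_invariant {𝒳 C : Type*} {N M dRel : ℕ}
    (g : 𝒳 → 𝒳 → C) (fr : C × C × ℝ × ℝ → EuclideanSpace ℝ (Fin dRel))
    (μ σ : EuclideanSpace ℝ (Fin dRel) → ℝ)
    (hσ : ∀ v, 0 < σ v)
    (τ : 𝒳 → 𝒳) (hτ : ∀ a b : 𝒳, g (τ a) (τ b) = g a b) :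
    ∀ (x : Fin N → 𝒳) (y : Fin N → ℝ) (xstar : Fin M → 𝒳) (ystar : Fin M → ℝ),
      rcnpDensity g fr μ σ (τ ∘ x) y (τ ∘ xstar) ystar =
        rcnpDensity g fr μ σ x y xstar ystar :=
  rcnpDensity_invariant_general g fr μ σ τ hτ
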